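/- A Matkowski mean M_{f,g}, with f,g : I → ℝ continuous and strictly increasing, is balanced if and only if M_{f,g} equals the quasi-arithmetic mean A_{f+g} generated by f+g on I × I. -/

import Mathlib

/-!
Write `F = f + g`. Both conditions turn out to be equivalent to `f - g` being constant on `I`.
For the quasi-arithmetic mean this is immediate: `f x + g y = (F x + F y) / 2` rearranges to
`f x - g x = f y - g y`. If `f - g` is constant, the balance identity reduces to the same
linear relation. Conversely, given `c < d` close together, let `m` be the `F`-mean of `c` and `d`
and solve `f x = F c - g m`, `g y = F d - f m` by the intermediate value theorem. Then
`M x y = m`, `M x m = c` and `M m y = d`, so balance gives `M c d = m`, i.e.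
`f c + g d = (F c + F d) / 2`, hence `f c - g c = f d - g d`. Thus `f - g` is locally constant,
hence constant on the interval `I`.
-/

open Set Filter Topology

theorem IsOpen.apply_eq_of_eventually_eq {s : Set ℝ} {φ : ℝ → ℝ} (hs : IsOpen s)
    (hs' : IsPreconnected s) (hφ : ∀ x ∈ s, ∀ᶠ y in 𝓝 x, φ y = φ x) {x y : ℝ}
    (hx : x ∈ s) (hy : y ∈ s) : φ x = φ y := by
  have hderiv : ∀ z ∈ s, HasDerivAt φ 0 z := fun z hz =>
    (hasDerivAt_const z (φ z)).congr_of_eventuallyEq (hφ z hz)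
  exact hs.is_const_of_deriv_eq_zero hs'
    (fun z hz => (hderiv z hz).differentiableAt.differentiableWithinAt)
    (fun z hz => (hderiv z hz).deriv) hx hy

def IsBalancedOn (M : ℝ → ℝ → ℝ) (I : Set ℝ) : Prop :=
  ∀ x ∈ I, ∀ y ∈ I, M (M x (M x y)) (M (M x y) y) = M x y

namespace Matkowski

variable {I : Set ℝ} {f g Finv : ℝ → ℝ}

theorem ordConnected_image (hIc : I.OrdConnected) {φ : ℝ → ℝ} (hφ : ContinuousOn φ I) :
    (φ '' I).OrdConnected :=
  (hIc.isPreconnected.image φ hφ).ordConnected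

theorem add_mem_image (hIc : I.OrdConnected) (hfc : ContinuousOn f I) (hgc : ContinuousOn g I)
    (hfm : MonotoneOn f I) (hgm : MonotoneOn g I) {x y : ℝ} (hx : x ∈ I) (hy : y ∈ I) :
    f x + g y ∈ (fun t => f t + g t) '' I := by
  refine (ordConnected_image hIc (φ := fun t => f t + g t) (hfc.add hgc)).uIcc_subset
    (mem_image_of_mem _ hx) (mem_image_of_mem _ hy) (mem_uIcc.2 ?_)
  rcases le_total x y with hxy | hyx
  · exact .inl ⟨by linarith [hgm hx hy hxy], by linarith [hfm hx hy hxy]⟩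
  · exact .inr ⟨by linarith [hfm hy hx hyx], by linarith [hgm hy hx hyx]⟩

theorem average_mem_image (hIc : I.OrdConnected) (hfc : ContinuousOn f I)
    (hgc : ContinuousOn g I) {x y : ℝ} (hx : x ∈ I) (hy : y ∈ I) :
    ((f x + g x) + (f y + g y)) / 2 ∈ (fun t => f t + g t) '' I := by
  refine (ordConnected_image hIc (φ := fun t => f t + g t) (hfc.add hgc)).uIcc_subset
    (mem_image_of_mem _ hx) (mem_image_of_mem _ hy) (mem_uIcc.2 ?_)
  rcases le_total (f x + g x) (f y + g y) with h | h
  · exact .inl ⟨by linarith, by linarith⟩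
  · exact .inr ⟨by linarith, by linarith⟩

theorem sub_eq_sub_of_isBalancedOn_of_margins (hIc : I.OrdConnected) (hfc : ContinuousOn f I)
    (hgc : ContinuousOn g I) (hfm : StrictMonoOn f I) (hgm : StrictMonoOn g I)
    (hleft : ∀ x ∈ I, Finv (f x + g x) = x)
    (hright : ∀ z ∈ (fun t => f t + g t) '' I, Finv z ∈ I ∧ f (Finv z) + g (Finv z) = z)
    (hbal : IsBalancedOn (fun x y => Finv (f x + g y)) I) {c d s t : ℝ} (hc : c ∈ I)
    (hd : d ∈ I) (hs : s ∈ I) (ht : t ∈ I) (hcd : c ≤ d)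
    (hs_margin : g d - g c ≤ f c - f s) (ht_margin : f d - f c ≤ g t - g d) :
    f c - g c = f d - g d := by
  obtain ⟨hmI, hFm⟩ := hright _ (average_mem_image hIc hfc hgc hc hd)
  set m := Finv (((f c + g c) + (f d + g d)) / 2)
  have hF : StrictMonoOn (fun t => f t + g t) I := hfm.add hgm
  have hFcd : f c + g c ≤ f d + g d := hF.monotoneOn hc hd hcd
  have hcm : c ≤ m := (hF.le_iff_le hc hmI).1 (by linarith)
  have hmd : m ≤ d := (hF.le_iff_le hmI hd).1 (by linarith)
  have hgcm := hgm.monotoneOn hc hmI hcm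
  have hgmd := hgm.monotoneOn hmI hd hmd
  have hfcm := hfm.monotoneOn hc hmI hcm
  have hfmd := hfm.monotoneOn hmI hd hmd
  obtain ⟨x, hx, hfx⟩ : ∃ x ∈ I, f x = f c + g c - g m :=
    (ordConnected_image hIc hfc).out (mem_image_of_mem f hs) (mem_image_of_mem f hc)
      ⟨by linarith, by linarith⟩
  obtain ⟨y, hy, hgy⟩ : ∃ y ∈ I, g y = f d + g d - f m :=
    (ordConnected_image hIc hgc).out (mem_image_of_mem g hd) (mem_image_of_mem g ht)
      ⟨by linarith, by linarith⟩
  have hxy : Finv (f x + g y) = m := by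
    rw [show f x + g y = f m + g m by linarith]; exact hleft m hmI
  have hxm : Finv (f x + g m) = c := by
    rw [show f x + g m = f c + g c by linarith]; exact hleft c hc
  have hmy : Finv (f m + g y) = d := by
    rw [show f m + g y = f d + g d by linarith]; exact hleft d hd
  have hcd_mean : Finv (f c + g d) = m := by
    simpa only [hxy, hxm, hmy] using hbal x hx y hy
  have := (hright _ (add_mem_image hIc hfc hgc hfm.monotoneOn hgm.monotoneOn hc hd)).2
  rw [hcd_mean] at this
  linarith

theorem eventually_sub_eq_of_isBalancedOn (hI : IsOpen I) (hIc : I.OrdConnected)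
    (hfc : ContinuousOn f I) (hgc : ContinuousOn g I) (hfm : StrictMonoOn f I)
    (hgm : StrictMonoOn g I) (hleft : ∀ x ∈ I, Finv (f x + g x) = x)
    (hright : ∀ z ∈ (fun t => f t + g t) '' I, Finv z ∈ I ∧ f (Finv z) + g (Finv z) = z)
    (hbal : IsBalancedOn (fun x y => Finv (f x + g y)) I) {c : ℝ} (hc : c ∈ I) :
    ∀ᶠ d in 𝓝 c, f d - g d = f c - g c := by
  obtain ⟨l, r, ⟨hlc, hcr⟩, hlr⟩ := mem_nhds_iff_exists_Ioo_subset.1 (hI.mem_nhds hc)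
  obtain ⟨s, hls, hsc⟩ := exists_between hlc
  obtain ⟨t, hct, htr⟩ := exists_between hcr
  have hs : s ∈ I := hlr ⟨hls, hsc.trans hcr⟩
  have ht : t ∈ I := hlr ⟨hlc.trans hct, htr⟩
  have hfs := hfm hs hc hsc
  have hgt := hgm hc ht hct
  have hf : ContinuousAt f c := hfc.continuousAt (hI.mem_nhds hc)
  have hg : ContinuousAt g c := hgc.continuousAt (hI.mem_nhds hc)
  have hF : ContinuousAt (fun x => f x + g x) c := hf.add hg
  filter_upwards [hI.mem_nhds hc,
    hg.eventually_lt (continuousAt_const (y := g c + (f c - f s))) (by linarith),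
    hF.eventually_lt (continuousAt_const (y := f c + g t)) (by linarith),
    (continuousAt_const (y := g c + f s)).eventually_lt hF (by linarith),
    (continuousAt_const (y := f c + g c - g t)).eventually_lt hf (by linarith)]
    with d hd h₁ h₂ h₃ h₄
  rcases le_total c d with hcd | hdc
  · exact (sub_eq_sub_of_isBalancedOn_of_margins hIc hfc hgc hfm hgm hleft hright hbal
      hc hd hs ht hcd (by linarith) (by linarith)).symm
  · exact sub_eq_sub_of_isBalancedOn_of_margins hIc hfc hgc hfm hgm hleft hright hbal
      hd hc hs ht hdc (by linarith) (by linarith)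

theorem sub_eq_sub_of_isBalancedOn (hI : IsOpen I) (hIc : I.OrdConnected)
    (hfc : ContinuousOn f I) (hgc : ContinuousOn g I) (hfm : StrictMonoOn f I)
    (hgm : StrictMonoOn g I) (hleft : ∀ x ∈ I, Finv (f x + g x) = x)
    (hright : ∀ z ∈ (fun t => f t + g t) '' I, Finv z ∈ I ∧ f (Finv z) + g (Finv z) = z)
    (hbal : IsBalancedOn (fun x y => Finv (f x + g y)) I) {x y : ℝ} (hx : x ∈ I)
    (hy : y ∈ I) :
    f x - g x = f y - g y :=
  hI.apply_eq_of_eventually_eq (φ := fun t => f t - g t) hIc.isPreconnected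
    (fun _ hc => eventually_sub_eq_of_isBalancedOn hI hIc hfc hgc hfm hgm hleft hright hbal hc)
    hx hy

theorem isBalancedOn_of_sub_eq_sub (hIc : I.OrdConnected) (hfc : ContinuousOn f I)
    (hgc : ContinuousOn g I) (hfm : MonotoneOn f I) (hgm : MonotoneOn g I)
    (hleft : ∀ x ∈ I, Finv (f x + g x) = x)
    (hright : ∀ z ∈ (fun t => f t + g t) '' I, Finv z ∈ I ∧ f (Finv z) + g (Finv z) = z)
    (hconst : ∀ x ∈ I, ∀ y ∈ I, f x - g x = f y - g y) :
    IsBalancedOn (fun x y => Finv (f x + g y)) I := by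
  intro x hx y hy
  have hmem {x y : ℝ} (hx : x ∈ I) (hy : y ∈ I) :=
    hright _ (add_mem_image hIc hfc hgc hfm hgm hx hy)
  obtain ⟨hu, hFu⟩ := hmem hx hy
  set u := Finv (f x + g y)
  obtain ⟨ha, hFa⟩ := hmem hx hu
  obtain ⟨hb, hFb⟩ := hmem hu hy
  have := hconst _ ha _ hb
  show Finv (f (Finv (f x + g u)) + g (Finv (f u + g y))) = u
  rw [show f (Finv (f x + g u)) + g (Finv (f u + g y)) = f u + g u by linarith, hleft u hu]

theorem quasiArithmetic_iff_sub_eq_sub (hIc : I.OrdConnected) (hfc : ContinuousOn f I)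
    (hgc : ContinuousOn g I) (hfm : MonotoneOn f I) (hgm : MonotoneOn g I)
    (hright : ∀ z ∈ (fun t => f t + g t) '' I, Finv z ∈ I ∧ f (Finv z) + g (Finv z) = z) :
    (∀ x ∈ I, ∀ y ∈ I, Finv (f x + g y) = Finv (((f x + g x) + (f y + g y)) / 2)) ↔
      ∀ x ∈ I, ∀ y ∈ I, f x - g x = f y - g y := by
  have hinj : InjOn Finv ((fun t => f t + g t) '' I) :=
    LeftInvOn.injOn (f₁' := fun t => f t + g t) fun z hz => (hright z hz).2
  refine ⟨fun h x hx y hy => ?_, fun h x hx y hy => congrArg Finv (by linarith [h x hx y hy])⟩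
  have := hinj (add_mem_image hIc hfc hgc hfm hgm hx hy) (average_mem_image hIc hfc hgc hx hy)
    (h x hx y hy)
  linarith

theorem isBalancedOn_iff_sub_eq_sub (hI : IsOpen I) (hIc : I.OrdConnected)
    (hfc : ContinuousOn f I) (hgc : ContinuousOn g I) (hfm : StrictMonoOn f I)
    (hgm : StrictMonoOn g I) (hleft : ∀ x ∈ I, Finv (f x + g x) = x)
    (hright : ∀ z ∈ (fun t => f t + g t) '' I, Finv z ∈ I ∧ f (Finv z) + g (Finv z) = z) :
    IsBalancedOn (fun x y => Finv (f x + g y)) I ↔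
      ∀ x ∈ I, ∀ y ∈ I, f x - g x = f y - g y :=
  ⟨fun hbal _ hx _ hy =>
    sub_eq_sub_of_isBalancedOn hI hIc hfc hgc hfm hgm hleft hright hbal hx hy,
    isBalancedOn_of_sub_eq_sub hIc hfc hgc hfm.monotoneOn hgm.monotoneOn hleft hright⟩

end Matkowski

theorem matkowski_balanced_iff_quasiArithmetic_general (I : Set ℝ) (hI : IsOpen I)
    (hIc : I.OrdConnected) (f g Finv : ℝ → ℝ)
    (hfc : ContinuousOn f I) (hgc : ContinuousOn g I)
    (hfm : StrictMonoOn f I) (hgm : StrictMonoOn g I)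
    (hleft : ∀ x ∈ I, Finv (f x + g x) = x)
    (hright : ∀ z ∈ (fun t => f t + g t) '' I,
      Finv z ∈ I ∧ f (Finv z) + g (Finv z) = z)
    (M : ℝ → ℝ → ℝ) (hM : ∀ x y : ℝ, M x y = Finv (f x + g y)) :
    (∀ x ∈ I, ∀ y ∈ I, M (M x (M x y)) (M (M x y) y) = M x y) ↔
    (∀ x ∈ I, ∀ y ∈ I,
      M x y = Finv (((f x + g x) + (f y + g y)) / 2)) := by
  obtain rfl : M = fun x y => Finv (f x + g y) := funext₂ hM
  exact (Matkowski.isBalancedOn_iff_sub_eq_sub hI hIc hfc hgc hfm hgm hleft hright).trans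
    (Matkowski.quasiArithmetic_iff_sub_eq_sub hIc hfc hgc hfm.monotoneOn hgm.monotoneOn
      hright).symm

/-- A Matkowski mean is balanced iff it is the quasi-arithmetic mean generated
by `f + g`. -/
theorem matkowski_balanced_iff_quasiArithmetic (I : Set ℝ) (hI : IsOpen I)
    (hIne : I.Nonempty) (hIc : I.OrdConnected) (f g Finv : ℝ → ℝ)
    (hfc : ContinuousOn f I) (hgc : ContinuousOn g I)
    (hfm : StrictMonoOn f I) (hgm : StrictMonoOn g I)
    (hleft : ∀ x ∈ I, Finv (f x + g x) = x)
    (hright : ∀ z ∈ (fun t => f t + g t) '' I,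
      Finv z ∈ I ∧ f (Finv z) + g (Finv z) = z)
    (himg : ∀ x ∈ I, ∀ y ∈ I, f x + g y ∈ (fun t => f t + g t) '' I)
    (M : ℝ → ℝ → ℝ) (hM : ∀ x y : ℝ, M x y = Finv (f x + g y)) :
    (∀ x ∈ I, ∀ y ∈ I, M (M x (M x y)) (M (M x y) y) = M x y) ↔
    (∀ x ∈ I, ∀ y ∈ I,
      M x y = Finv (((f x + g x) + (f y + g y)) / 2)) :=
  matkowski_balanced_iff_quasiArithmetic_general I hI hIc f g Finv hfc hgc hfm hgm hleft hright M hM
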